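/- arXiv:1801.05625 — 3 statements merged into one kernel-verified Lean document; each statement's English description precedes it below -/
import Mathlib

section
/- Let {R_n} be defined by R_0(λ)=1, R_1(λ)=λ+1, and R_{n+1}(λ)=(λ+1)R_n(λ)−4d_{n+1}λ R_{n−1}(λ) for n≥1, where d_{n+1}=(1−m_n)m_{n+1} with 0<m_n<1 for all n≥1. Then each R_n is a monic polynomial of degree n, R_n(1)≠0, R_n(−1)=0 if and only if n is odd, and R_n satisfies the self-inversive property λ^n R_n(1/λ) = R_n(λ) for λ≠0. -/
/-!
Monicity, the degree, the parity at `-1` (where `R_{n+2}(-1) = 4 d_{n+2} R_n(-1)`) and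
self-inversiveness all follow from the recurrence by two-step induction. Non-vanishing at `1` is
the chain-sequence argument: `g_n = R_n(1)` satisfies
`g_{n+2} = 2 g_{n+1} - 4 (1 - m_{n+1}) m_{n+2} g_n`, so the gap `g_{n+1} - 2 (1 - m_{n+1}) g_n`
is multiplied by `2 m_{n+2} > 0` at each step. It starts at `2 m_1 > 0`, and then
`g_{n+1} > 2 (1 - m_{n+1}) g_n ≥ 0` propagates positivity.
-/

open Polynomial

-- `b n` plays the role of `4 d_n`.
structure IsParaOrthRecurrence {K : Type*} [CommRing K] (b : ℕ → K) (R : ℕ → K[X]) : Prop where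
  zero : R 0 = 1
  one : R 1 = X + 1
  succ_succ : ∀ n, R (n + 2) = (X + 1) * R (n + 1) - C (b (n + 2)) * (X * R n)

namespace IsParaOrthRecurrence

section CommRing

variable {K : Type*} [CommRing K] {b : ℕ → K} {R : ℕ → K[X]}

theorem eval_succ_succ (h : IsParaOrthRecurrence b R) (n : ℕ) (x : K) :
    (R (n + 2)).eval x = (x + 1) * (R (n + 1)).eval x - b (n + 2) * (x * (R n).eval x) := by
  simp [h.succ_succ]

theorem monic_and_natDegree_eq [Nontrivial K] (h : IsParaOrthRecurrence b R) :
    ∀ n, (R n).Monic ∧ (R n).natDegree = n := by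
  have hX1 : (X + 1 : K[X]).Monic ∧ (X + 1 : K[X]).natDegree = 1 :=
    ⟨by simpa using monic_X_add_C (1 : K), by simpa using natDegree_X_add_C (1 : K)⟩
  refine Nat.twoStepInduction (by simp [h.zero]) (h.one ▸ hX1) fun n ⟨mon₀, deg₀⟩ ⟨mon₁, deg₁⟩ ↦ ?_
  have hlead : ((X + 1) * R (n + 1)).natDegree = n + 2 := by
    rw [hX1.1.natDegree_mul mon₁, hX1.2, deg₁]; ring
  have htail : (C (b (n + 2)) * (X * R n)).natDegree < ((X + 1) * R (n + 1)).natDegree := by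
    calc (C (b (n + 2)) * (X * R n)).natDegree ≤ (X * R n).natDegree := natDegree_C_mul_le _ _
      _ = n + 1 := by rw [natDegree_X_mul mon₀.ne_zero, deg₀]
      _ < _ := by omega
  rw [h.succ_succ]
  exact ⟨(hX1.1.mul mon₁).sub_of_left (degree_lt_degree htail),
    (natDegree_sub_eq_left_of_natDegree_lt htail).trans hlead⟩

theorem eval_neg_one_eq_zero_iff [IsDomain K] (h : IsParaOrthRecurrence b R)
    (hb : ∀ n, b (n + 2) ≠ 0) (n : ℕ) : (R n).eval (-1) = 0 ↔ Odd n := by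
  induction n using Nat.twoStepInduction with
  | zero => simp [h.zero]
  | one => simp [h.one]
  | more n ih _ =>
    have : (R (n + 2)).eval (-1) = b (n + 2) * (R n).eval (-1) := by
      rw [h.eval_succ_succ]; ring
    rw [this, mul_eq_zero, or_iff_right (hb n), ih, Nat.odd_add_one, Nat.odd_add_one, not_not]

end CommRing

theorem pow_mul_eval_inv {K : Type*} [Field K] {b : ℕ → K} {R : ℕ → K[X]}
    (h : IsParaOrthRecurrence b R) {x : K} (hx : x ≠ 0) (n : ℕ) :
    x ^ n * (R n).eval x⁻¹ = (R n).eval x := by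
  induction n using Nat.twoStepInduction with
  | zero => simp [h.zero]
  | one => simp [h.one, mul_add, hx, add_comm]
  | more n ih₀ ih₁ =>
    calc x ^ (n + 2) * (R (n + 2)).eval x⁻¹
        = (x + 1) * (x ^ (n + 1) * (R (n + 1)).eval x⁻¹)
            - b (n + 2) * (x * (x ^ n * (R n).eval x⁻¹)) := by
          rw [h.eval_succ_succ]; field_simp; ring
      _ = (R (n + 2)).eval x := by rw [ih₀, ih₁, h.eval_succ_succ]

end IsParaOrthRecurrence

section ChainSequence

variable {K : Type*} [Field K] [LinearOrder K] [IsStrictOrderedRing K] {m g : ℕ → K}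

theorem chain_gap_lt (hm : ∀ n, 0 < m (n + 2)) (h₁ : 2 * (1 - m 1) * g 0 < g 1)
    (hg : ∀ n, g (n + 2) = 2 * g (n + 1) - 4 * ((1 - m (n + 1)) * m (n + 2)) * g n) (n : ℕ) :
    2 * (1 - m (n + 1)) * g n < g (n + 1) := by
  induction n with
  | zero => exact h₁
  | succ n ih =>
    have : g (n + 2) - 2 * (1 - m (n + 2)) * g (n + 1)
        = 2 * m (n + 2) * (g (n + 1) - 2 * (1 - m (n + 1)) * g n) := by rw [hg]; ring
    have := mul_pos (mul_pos two_pos (hm n)) (sub_pos.2 ih)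
    linarith

theorem pos_of_chain_gap (hm : ∀ n, m (n + 1) ≤ 1) (h₀ : 0 < g 0)
    (hgap : ∀ n, 2 * (1 - m (n + 1)) * g n < g (n + 1)) (n : ℕ) : 0 < g n := by
  induction n with
  | zero => exact h₀
  | succ n ih =>
    have : 0 ≤ 2 * (1 - m (n + 1)) * g n := by
      have := sub_nonneg.2 (hm n); positivity
    exact this.trans_lt (hgap n)

end ChainSequence

/-- Properties of the para-orthogonal-type polynomials generated
by the chain-sequence recurrence. -/
theorem stmt5 (d m : ℕ → ℝ) (R : ℕ → Polynomial ℝ)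
    (hm : ∀ n, 1 ≤ n → 0 < m n ∧ m n < 1)
    (hd : ∀ n, 1 ≤ n → d (n + 1) = (1 - m n) * m (n + 1))
    (hR0 : R 0 = 1) (hR1 : R 1 = X + 1)
    (hrec : ∀ n, 1 ≤ n →
      R (n + 1) = (X + 1) * R n - C (4 * d (n + 1)) * (X * R (n - 1))) :
    ∀ n, (R n).Monic ∧ (R n).natDegree = n ∧ (R n).eval 1 ≠ 0 ∧
      ((R n).eval (-1) = 0 ↔ Odd n) ∧
      ∀ lam : ℝ, lam ≠ 0 → lam ^ n * (R n).eval (1 / lam) = (R n).eval lam := by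
  have hR : IsParaOrthRecurrence (fun n ↦ 4 * d n) R :=
    ⟨hR0, hR1, fun n ↦ hrec (n + 1) n.succ_pos⟩
  have hd' (n : ℕ) : d (n + 2) = (1 - m (n + 1)) * m (n + 2) := hd (n + 1) n.succ_pos
  have heval_one (n : ℕ) : (R (n + 2)).eval 1
      = 2 * (R (n + 1)).eval 1 - 4 * ((1 - m (n + 1)) * m (n + 2)) * (R n).eval 1 := by
    rw [hR.eval_succ_succ, hd']; ring
  have hgap := chain_gap_lt (g := fun n ↦ (R n).eval 1) (fun n ↦ (hm (n + 2) (by omega)).1)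
    (by simp only [hR0, hR1, eval_one, eval_add, eval_X]; linarith [(hm 1 le_rfl).1]) heval_one
  have hpos := pos_of_chain_gap (fun n ↦ (hm (n + 1) (by omega)).2.le) (by simp [hR0]) hgap
  have hb (n : ℕ) : 4 * d (n + 2) ≠ 0 := by
    obtain ⟨-, hlt⟩ := hm (n + 1) (by omega)
    obtain ⟨hm₂, -⟩ := hm (n + 2) (by omega)
    rw [hd']
    exact mul_ne_zero four_ne_zero (mul_pos (sub_pos.2 hlt) hm₂).ne'
  intro n
  refine ⟨(hR.monic_and_natDegree_eq n).1, (hR.monic_and_natDegree_eq n).2, (hpos n).ne',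
    hR.eval_neg_one_eq_zero_iff hb n, fun lam hlam ↦ by rw [one_div, hR.pow_mul_eval_inv hlam]⟩
end

section
/- Let R_0(λ)=1, R_1(λ)=λ+1, R_{n+1}(λ)=(λ+1)R_n(λ)−4d_{n+1}λR_{n−1}(λ), with d_{n+1}=(1−m_n)m_{n+1}, 0<m_n<1. Then all zeros of R_n lie on the unit circle |λ|=1 and are simple. -/
/-!
Substituting `λ = z²` and `x = (z + z⁻¹) / 2` turns the recurrence into `Rₙ(z²) = (2z)ⁿ qₙ(x)`
for the real monic polynomials `q₀ = 1`, `q₁ = X`, `qₙ₊₂ = X qₙ₊₁ - dₙ₊₂ qₙ`. Since `{dₙ₊₁}` is a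
positive chain sequence, `dₙ₊₂ > 0` and `qₙ(1) > 0`, and a Sturm-type argument shows inductively
that the zeros of `qₙ` and `qₙ₊₁` are simple, lie in `(-1, 1)` and interlace. A zero `cos θ`,
`0 < θ < π`, of `qₙ` gives the zero `e^{2iθ}` of `Rₙ`; these `n` points are distinct and `Rₙ` is
monic of degree `n`, so they are all its zeros, each simple.
-/

open Polynomial Finset

namespace Polynomial

variable {K : Type*} [CommRing K] [IsDomain K]

theorem roots_eq_val_of_card_eq_natDegree {p : K[X]} (hp : p ≠ 0) {s : Finset K}
    (hs : s.card = p.natDegree) (hroot : ∀ a ∈ s, p.IsRoot a) : p.roots = s.val :=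
  (Multiset.eq_of_le_of_card_le
    ((Multiset.le_iff_subset s.nodup).2 fun a ha => (mem_roots hp).2 (hroot a ha))
    ((card_roots' p).trans_eq hs.symm)).symm

theorem Monic.eq_prod_range_X_sub_C {p : K[X]} (hp : p.Monic) {n : ℕ} {x : ℕ → K}
    (hdeg : p.natDegree = n) (hx : Set.InjOn x (Set.Iio n)) (hroot : ∀ i < n, p.IsRoot (x i)) :
    p = ∏ i ∈ range n, (X - C (x i)) := by
  classical
  have hx' : Set.InjOn x (range n) := by simpa [Set.InjOn] using hx
  have hcard : ((range n).image x).card = n := by rw [card_image_of_injOn hx', card_range]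
  have hroots : p.roots = ((range n).image x).val :=
    roots_eq_val_of_card_eq_natDegree hp.ne_zero (hcard.trans hdeg.symm)
      (by simpa using fun i hi => hroot i hi)
  conv_lhs => rw [← prod_multiset_X_sub_C_of_monic_of_roots_card_eq hp
    (by rw [hroots, hdeg]; exact hcard), hroots]
  exact prod_image fun i hi j hj hij => hx' hi hj hij

omit [IsDomain K] in
theorem Monic.sub_of_natDegree_lt {p r : K[X]} {k : ℕ} (hp : p.Monic) (hpk : p.natDegree = k)
    (hr : r.natDegree < k) : (p - r).Monic ∧ (p - r).natDegree = k :=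
  ⟨hp.sub_of_left (degree_lt_degree (hpk ▸ hr)),
    (natDegree_sub_eq_left_of_natDegree_lt (hpk ▸ hr)).trans hpk⟩

end Polynomial

theorem neg_one_pow_mul_prod_sub_pos {n i : ℕ} (hi : i ≤ n) {x : ℕ → ℝ} {t : ℝ}
    (hlt : ∀ j < i, t < x j) (hgt : ∀ j, i ≤ j → j < n → x j < t) :
    0 < (-1) ^ i * ∏ j ∈ range n, (t - x j) := by
  have hneg : ∏ j ∈ range i, (x j - t) = (-1) ^ i * ∏ j ∈ range i, (t - x j) := by
    simpa using prod_neg (s := range i) fun j => t - x j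
  rw [← prod_range_mul_prod_Ico _ hi, ← mul_assoc, ← hneg]
  refine mul_pos (prod_pos fun j hj => ?_) (prod_pos fun j hj => ?_)
  · linarith [hlt j (mem_range.1 hj)]
  · obtain ⟨hij, hjn⟩ := mem_Ico.1 hj
    linarith [hgt j hij hjn]

theorem exists_roots_of_alternating_signs (p : ℝ[X]) {N : ℕ} {a : ℕ → ℝ}
    (ha : ∀ i < N, a (i + 1) < a i) (hsign : ∀ i ≤ N, 0 < (-1) ^ i * p.eval (a i)) :
    ∃ z : ℕ → ℝ, ∀ i < N, z i ∈ Set.Ioo (a (i + 1)) (a i) ∧ p.IsRoot (z i) := by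
  have key : ∀ i < N, ∃ c ∈ Set.Ioo (a (i + 1)) (a i), p.IsRoot c := by
    intro i hi
    have hf : ContinuousOn (fun t => (-1) ^ i * p.eval t) (Set.Icc (a (i + 1)) (a i)) :=
      (continuous_const.mul p.continuous).continuousOn
    have hnext := hsign (i + 1) hi
    rw [pow_succ] at hnext
    obtain ⟨c, hc, hfc⟩ := intermediate_value_Ioo (ha i hi).le hf
      ⟨by linarith, hsign i hi.le⟩
    exact ⟨c, hc, by simpa using hfc⟩
  choose! z hz using key
  exact ⟨z, hz⟩

def SortedRootsIn (p : ℝ[X]) (n : ℕ) (x : ℕ → ℝ) : Prop :=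
  StrictAntiOn x (Set.Iio n) ∧ ∀ i < n, x i ∈ Set.Ioo (-1) 1 ∧ p.IsRoot (x i)

def Interlaces (n : ℕ) (x y : ℕ → ℝ) : Prop :=
  ∀ i < n, y (i + 1) < x i ∧ x i < y i

theorem neg_one_pow_mul_eval_pos_of_interlaces {p : ℝ[X]} {n : ℕ} {x y : ℕ → ℝ} (hp : p.Monic)
    (hdeg : p.natDegree = n) (hx : SortedRootsIn p n x) (hy : StrictAntiOn y (Set.Iio (n + 1)))
    (hxy : Interlaces n x y) {i : ℕ} (hi : i < n + 1) : 0 < (-1) ^ i * p.eval (y i) := by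
  rw [hp.eq_prod_range_X_sub_C hdeg hx.1.injOn fun j hj => (hx.2 j hj).2, eval_prod]
  simp only [eval_sub, eval_X, eval_C]
  refine neg_one_pow_mul_prod_sub_pos (by omega) (fun j hj => ?_) fun j hij hjn => ?_
  · calc y i ≤ y (j + 1) := hy.antitoneOn (by simp; omega) (by simpa using hi) (by omega)
      _ < x j := (hxy j (by omega)).1
  · calc x j < y j := (hxy j hjn).2
      _ ≤ y i := hy.antitoneOn (by simpa using hi) (by simp; omega) hij

theorem exists_sortedRootsIn_interlaces (p : ℝ[X]) {N : ℕ} {y : ℕ → ℝ}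
    (hy : StrictAntiOn y (Set.Iio N)) (hy_mem : ∀ i < N, y i ∈ Set.Ioo (-1) 1)
    (hone : 0 < p.eval 1) (hneg_one : 0 < (-1) ^ (N + 1) * p.eval (-1))
    (hsign : ∀ i < N, 0 < (-1) ^ (i + 1) * p.eval (y i)) :
    ∃ z, SortedRootsIn p (N + 1) z ∧ Interlaces N y z := by
  -- the grid `1 > y 0 > ⋯ > y (N - 1) > -1`
  let a : ℕ → ℝ := fun
    | 0 => 1
    | j + 1 => if j < N then y j else -1
  have ha_mem : ∀ i, a i ∈ Set.Icc (-1) 1 := by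
    rintro (_ | j)
    · simp [a]
    · by_cases hj : j < N
      · simpa [a, hj] using Set.Ioo_subset_Icc_self (hy_mem j hj)
      · simp [a, hj]
  have ha_anti : ∀ i < N + 1, a (i + 1) < a i := by
    rintro (_ | j) hj
    · by_cases hN : 0 < N
      · simpa [a, hN] using (hy_mem 0 hN).2
      · simp [a, hN]
    · by_cases hjN : j + 1 < N
      · simpa [a, hjN, show j < N by omega] using
          hy (show j ∈ Set.Iio N by simp; omega) (show j + 1 ∈ Set.Iio N from hjN) (by omega)
      · simpa [a, hjN, show j < N by omega] using (hy_mem j (by omega)).1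
  have ha_sign : ∀ i ≤ N + 1, 0 < (-1) ^ i * p.eval (a i) := by
    rintro (_ | j) hj
    · simpa [a] using hone
    · by_cases hjN : j < N
      · simpa [a, hjN] using hsign j hjN
      · simpa [a, hjN, show j = N by omega] using hneg_one
  obtain ⟨z, hz⟩ := exists_roots_of_alternating_signs p ha_anti ha_sign
  have hyz : Interlaces N y z := fun i hi => by
    simpa [a, hi] using And.intro (hz (i + 1) (by omega)).1.2 (hz i (by omega)).1.1
  refine ⟨z, ⟨?_, fun i hi => ⟨?_, (hz i hi).2⟩⟩, hyz⟩
  · refine (strictAntiOn_Iic_of_succ_lt fun m hm => ?_).mono fun i hi => Nat.lt_succ_iff.1 hi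
    exact (hyz m hm).1.trans (hyz m hm).2
  · obtain ⟨⟨hlo, hhi⟩, -⟩ := hz i hi
    exact ⟨(ha_mem (i + 1)).1.trans_lt hlo, hhi.trans_le (ha_mem i).2⟩

noncomputable def chainPoly (d : ℕ → ℝ) : ℕ → ℝ[X]
  | 0 => 1
  | 1 => X
  | n + 2 => X * chainPoly d (n + 1) - C (d (n + 2)) * chainPoly d n

namespace chainPoly

variable (d : ℕ → ℝ)

theorem monic_and_natDegree (n : ℕ) : (chainPoly d n).Monic ∧ (chainPoly d n).natDegree = n := by
  induction n using Nat.twoStepInduction with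
  | zero => simp [chainPoly]
  | one => simp [chainPoly]
  | more n ih₀ ih₁ =>
    refine (monic_X.mul ih₁.1).sub_of_natDegree_lt ?_ ?_
    · rw [natDegree_X_mul ih₁.1.ne_zero, ih₁.2]
    · exact (natDegree_C_mul_le _ _).trans_lt (by rw [ih₀.2]; omega)

theorem eval_neg (n : ℕ) (t : ℝ) :
    (chainPoly d n).eval (-t) = (-1) ^ n * (chainPoly d n).eval t := by
  induction n using Nat.twoStepInduction with
  | zero => simp [chainPoly]
  | one => simp [chainPoly]
  | more n ih₀ ih₁ =>
    simp only [chainPoly, eval_sub, eval_mul, eval_X, eval_C, ih₀, ih₁]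
    ring

variable {d} {m : ℕ → ℝ} (hm : ∀ n, 1 ≤ n → 0 < m n ∧ m n < 1)
  (hd : ∀ n, 1 ≤ n → d (n + 1) = (1 - m n) * m (n + 1))
include hm hd

-- The chain sequence `dₙ₊₁ = (1 - mₙ) mₙ₊₁` keeps the ratio `qₙ₊₁(1) / qₙ(1)` above `1 - mₙ₊₁`.
theorem eval_one_pos_and_lt (n : ℕ) : 0 < (chainPoly d n).eval 1 ∧
    (1 - m (n + 1)) * (chainPoly d n).eval 1 < (chainPoly d (n + 1)).eval 1 := by
  induction n with
  | zero => simpa [chainPoly] using (hm 1 le_rfl).1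
  | succ n ih =>
    obtain ⟨hpos, hlt⟩ := ih
    have hm₁ := hm (n + 1) (by omega)
    have hm₂ := hm (n + 2) (by omega)
    have hpos' : 0 < (chainPoly d (n + 1)).eval 1 := by nlinarith
    refine ⟨hpos', ?_⟩
    simp only [chainPoly, eval_sub, eval_mul, eval_X, eval_C, one_mul, hd (n + 1) (by omega)]
    nlinarith [mul_lt_mul_of_pos_left hlt hm₂.1]

theorem exists_sortedRootsIn (n : ℕ) : ∃ x y, SortedRootsIn (chainPoly d n) n x ∧
    SortedRootsIn (chainPoly d (n + 1)) (n + 1) y ∧ Interlaces n x y := by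
  induction n with
  | zero =>
    refine ⟨0, 0, ⟨fun i hi => by simp at hi, by simp⟩, ⟨fun i hi j hj hij => ?_, ?_⟩,
      by simp [Interlaces]⟩
    · simp only [Set.mem_Iio] at hi hj
      omega
    · simp [chainPoly]
  | succ n ih =>
    obtain ⟨x, y, hx, hy, hxy⟩ := ih
    have hd_pos : 0 < d (n + 2) := by
      rw [hd (n + 1) (by omega)]
      exact mul_pos (sub_pos.2 (hm (n + 1) (by omega)).2) (hm (n + 2) (by omega)).1
    obtain ⟨hmonic, hdeg⟩ := monic_and_natDegree d n
    have hone := (eval_one_pos_and_lt hm hd (n + 2)).1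
    have hneg_one : 0 < (-1) ^ (n + 2) * (chainPoly d (n + 2)).eval (-1) := by
      rw [eval_neg, ← mul_assoc, ← mul_pow]
      simpa using hone
    have hsign : ∀ i < n + 1, 0 < (-1) ^ (i + 1) * (chainPoly d (n + 2)).eval (y i) := by
      intro i hi
      have hprev := neg_one_pow_mul_eval_pos_of_interlaces hmonic hdeg hx hy.1 hxy hi
      -- at a root of `qₙ₊₁` the recurrence reads `qₙ₊₂ = -dₙ₊₂ qₙ`
      have hroot : (chainPoly d (n + 1)).eval (y i) = 0 := (hy.2 i hi).2
      simp only [chainPoly, eval_sub, eval_mul, eval_X, eval_C, hroot, mul_zero, zero_sub]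
      rw [pow_succ]
      nlinarith
    obtain ⟨z, hz, hyz⟩ := exists_sortedRootsIn_interlaces (chainPoly d (n + 2)) hy.1
      (fun i hi => (hy.2 i hi).1) hone hneg_one hsign
    exact ⟨y, z, hy, hz, hyz⟩

end chainPoly

noncomputable def circlePoint (x : ℝ) : ℂ := ⟨x, √(1 - x ^ 2)⟩

theorem normSq_circlePoint {x : ℝ} (hx : x ∈ Set.Icc (-1) 1) :
    Complex.normSq (circlePoint x) = 1 := by
  have : 0 ≤ 1 - x ^ 2 := by nlinarith [hx.1, hx.2]
  simp [circlePoint, Complex.normSq_apply, ← sq, Real.sq_sqrt this]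

theorem norm_circlePoint {x : ℝ} (hx : x ∈ Set.Icc (-1) 1) : ‖circlePoint x‖ = 1 := by
  rw [Complex.norm_def, normSq_circlePoint hx, Real.sqrt_one]

theorem circlePoint_add_inv_div_two {x : ℝ} (hx : x ∈ Set.Icc (-1) 1) :
    (circlePoint x + (circlePoint x)⁻¹) / 2 = x := by
  rw [Complex.inv_def, normSq_circlePoint hx, inv_one, Complex.ofReal_one, mul_one,
    Complex.add_conj]
  simp [circlePoint]

theorem injOn_circlePoint_sq : Set.InjOn (fun x => circlePoint x ^ 2) (Set.Ioo (-1) 1) := by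
  intro x hx y hy hxy
  have him_pos : ∀ t ∈ Set.Ioo (-1 : ℝ) 1, 0 < (circlePoint t).im := fun t ht =>
    Real.sqrt_pos.2 (by nlinarith [ht.1, ht.2])
  rcases sq_eq_sq_iff_eq_or_eq_neg.1 hxy with h | h
  · simpa [circlePoint] using congrArg Complex.re h
  · have := congrArg Complex.im h
    simp only [Complex.neg_im] at this
    linarith [him_pos x hx, him_pos y hy]

namespace ParaOrthogonal

variable {d : ℕ → ℝ} {R : ℕ → ℂ[X]} (hR0 : R 0 = 1) (hR1 : R 1 = X + 1)
  (hrec : ∀ n, 1 ≤ n →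
    R (n + 1) = (X + 1) * R n - C ((4 * d (n + 1) : ℝ) : ℂ) * (X * R (n - 1)))
include hR0 hR1 hrec

omit hR0 hR1 in
theorem rec_add_two (n : ℕ) :
    R (n + 2) = (X + 1) * R (n + 1) - C ((4 * d (n + 2) : ℝ) : ℂ) * (X * R n) :=
  hrec (n + 1) (by omega)

theorem monic_and_natDegree (n : ℕ) : (R n).Monic ∧ (R n).natDegree = n := by
  induction n using Nat.twoStepInduction with
  | zero => simp [hR0]
  | one => rw [hR1]; exact ⟨monic_X_add_C 1, natDegree_X_add_C 1⟩
  | more n ih₀ ih₁ =>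
    rw [rec_add_two hrec]
    refine ((monic_X_add_C 1).mul ih₁.1).sub_of_natDegree_lt ?_ ?_
    · rw [(monic_X_add_C 1).natDegree_mul ih₁.1, natDegree_X_add_C, ih₁.2, add_comm]
    · refine (natDegree_C_mul_le _ _).trans_lt ?_
      rw [natDegree_X_mul ih₀.1.ne_zero, ih₀.2]
      omega

theorem eval_sq_eq (n : ℕ) {z : ℂ} (hz : z ≠ 0) :
    (R n).eval (z ^ 2) = (2 * z) ^ n * aeval ((z + z⁻¹) / 2) (chainPoly d n) := by
  induction n using Nat.twoStepInduction with
  | zero => simp [hR0, chainPoly]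
  | one =>
    simp only [hR1, eval_add, eval_X, eval_one, pow_one, chainPoly, aeval_X]
    field_simp
  | more n ih₀ ih₁ =>
    rw [rec_add_two hrec]
    simp only [chainPoly, eval_sub, eval_mul, eval_add, eval_X, eval_one, eval_C, map_sub,
      map_mul, aeval_X, aeval_C, ih₀, ih₁, Complex.coe_algebraMap, Complex.ofReal_mul,
      Complex.ofReal_ofNat]
    field_simp
    ring

theorem isRoot_circlePoint_sq (n : ℕ) {x : ℝ} (hx : x ∈ Set.Icc (-1) 1)
    (hroot : (chainPoly d n).IsRoot x) : (R n).IsRoot (circlePoint x ^ 2) := by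
  have hne : circlePoint x ≠ 0 := fun h => by simpa [h] using norm_circlePoint hx
  have haeval : aeval (x : ℂ) (chainPoly d n) = (chainPoly d n).eval x := by
    simpa using aeval_algebraMap_apply_eq_algebraMap_eval (A := ℂ) x (chainPoly d n)
  rw [IsRoot, eval_sq_eq hR0 hR1 hrec n hne, circlePoint_add_inv_div_two hx, haeval,
    hroot.eq_zero, Complex.ofReal_zero, mul_zero]

end ParaOrthogonal

/-- All zeros of the para-orthogonal polynomials `R_n` generated
by the chain-sequence recurrence lie on the unit circle and are simple. -/
theorem stmt6 (d m : ℕ → ℝ) (R : ℕ → Polynomial ℂ)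
    (hm : ∀ n, 1 ≤ n → 0 < m n ∧ m n < 1)
    (hd : ∀ n, 1 ≤ n → d (n + 1) = (1 - m n) * m (n + 1))
    (hR0 : R 0 = 1) (hR1 : R 1 = X + 1)
    (hrec : ∀ n, 1 ≤ n →
      R (n + 1) = (X + 1) * R n - C ((4 * d (n + 1) : ℝ) : ℂ) * (X * R (n - 1))) :
    ∀ n, ∀ z : ℂ, (R n).IsRoot z →
      ‖z‖ = 1 ∧ Polynomial.rootMultiplicity z (R n) = 1 := by
  classical
  intro n z hz
  obtain ⟨x, -, ⟨hx_anti, hx⟩, -⟩ := chainPoly.exists_sortedRootsIn hm hd n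
  obtain ⟨hmonic, hdeg⟩ := ParaOrthogonal.monic_and_natDegree hR0 hR1 hrec n
  have hx_mem i (hi : i < n) : x i ∈ Set.Icc (-1) 1 := Set.Ioo_subset_Icc_self (hx i hi).1
  let s := (range n).image fun i => circlePoint (x i) ^ 2
  have hs_card : s.card = n := by
    refine (card_image_of_injOn fun i hi j hj hij => ?_).trans (card_range n)
    simp only [coe_range, Set.mem_Iio] at hi hj
    exact hx_anti.injOn hi hj (injOn_circlePoint_sq (hx i hi).1 (hx j hj).1 hij)
  have hroots : (R n).roots = s.val :=
    roots_eq_val_of_card_eq_natDegree hmonic.ne_zero (hs_card.trans hdeg.symm) fun w hw => by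
      obtain ⟨i, hi, rfl⟩ := mem_image.1 hw
      exact ParaOrthogonal.isRoot_circlePoint_sq hR0 hR1 hrec n (hx_mem i (mem_range.1 hi))
        (hx i (mem_range.1 hi)).2
  have hz_mem : z ∈ s := by rw [← mem_val, ← hroots]; exact (mem_roots hmonic.ne_zero).2 hz
  refine ⟨?_, by rw [← count_roots, hroots]; exact Multiset.count_eq_one_of_mem s.nodup hz_mem⟩
  obtain ⟨i, hi, rfl⟩ := mem_image.1 hz_mem
  rw [norm_pow, norm_circlePoint (hx_mem i (mem_range.1 hi)), one_pow]
end

section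
/- Let φ_n(b;λ) = ((2b+1)_n/(b+1)_n)·₂F₁(−n, b+1; 2b+1; 1−λ) and φ*_n(b;λ) = λ^n · conj(φ_n(b; 1/conj(λ))) (the reversed polynomial). Then φ*_n(b;λ) = ((2b+1)_n/(b+1)_n)·₂F₁(−n, b; 2b+1; 1−λ) for b > −1/2, as an identity of polynomials. -/
/-!
Since `(2b+1)_n/(b+1)_n` is real, conjugation only turns `1 - 1/conj λ` into `1 - 1/λ`, and the
claim becomes the Pfaff transformation `₂F₁(-n, β; γ; z) = (1-z)^n ₂F₁(-n, γ-β; γ; z/(z-1))` for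
`β = b`, `γ = 2b+1`, `z = 1-λ`. For a terminating series, Pfaff's transformation follows by
expanding `(1-z)^(n-k)` binomially: the coefficient of `z^m` is then a multiple of
`₂F₁(-m, γ-β; γ; 1)`, which the Chu–Vandermonde identity evaluates as `(β)_m/(γ)_m`.
-/

/-- Terminating Gauss hypergeometric series `₂F₁(-n, b; c; x)` over `ℂ`. -/
noncomputable def hypC (n : ℕ) (b c x : ℂ) : ℂ :=
  ∑ k ∈ Finset.range (n + 1),
    ((ascPochhammer ℂ k).eval (-(n : ℂ)) * (ascPochhammer ℂ k).eval b) /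
      ((ascPochhammer ℂ k).eval c * (Nat.factorial k : ℂ)) * x ^ k

open Finset Polynomial
open scoped ComplexConjugate

section Ring

variable {R : Type*} [Ring R]

theorem descPochhammer_smeval_int_eq_eval (k : ℕ) (r : R) :
    (descPochhammer ℤ k).smeval r = (descPochhammer R k).eval r := by
  rw [descPochhammer_smeval_eq_ascPochhammer, ascPochhammer_smeval_eq_eval,
    descPochhammer_eval_eq_ascPochhammer]

theorem descPochhammer_eval_neg (k : ℕ) (r : R) :
    (descPochhammer R k).eval (-r) = (-1) ^ k * (ascPochhammer R k).eval r := by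
  rw [← neg_neg r, ascPochhammer_eval_neg_eq_descPochhammer, neg_neg, ← mul_assoc, ← pow_add,
    ← two_mul, pow_mul, neg_one_sq, one_pow, one_mul]

theorem ascPochhammer_eval_neg_natCast (n k : ℕ) :
    (ascPochhammer R k).eval (-(n : R)) = (-1) ^ k * k.factorial * n.choose k := by
  rw [ascPochhammer_eval_neg_eq_descPochhammer, descPochhammer_eval_eq_descFactorial,
    Nat.descFactorial_eq_factorial_mul_choose, Nat.cast_mul, mul_assoc]

end Ring

/-- Chu–Vandermonde, obtained from the falling-factorial form
`(r + s)^{(m)} = ∑ C(m,k) r^{(k)} s^{(m-k)}` at `r = -α`, `s = γ + m - 1`. -/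
theorem ascPochhammer_eval_sub_eq_sum {R : Type*} [CommRing R] (m : ℕ) (α γ : R) :
    (ascPochhammer R m).eval (γ - α) = ∑ k ∈ range (m + 1),
      (-1) ^ k * m.choose k * (ascPochhammer R k).eval α *
        (ascPochhammer R (m - k)).eval (γ + k) := by
  have h := Ring.descPochhammer_smeval_add (r := -α) (s := γ + m - 1) m (Commute.all _ _)
  rw [Nat.sum_antidiagonal_eq_sum_range_succ (fun i j => (m.choose i : R) *
    ((descPochhammer ℤ i).smeval (-α) * (descPochhammer ℤ j).smeval (γ + m - 1)))] at h
  simp only [descPochhammer_smeval_int_eq_eval] at h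
  rw [show γ - α = -α + (γ + m - 1) - m + 1 by ring, ← descPochhammer_eval_eq_ascPochhammer, h]
  refine sum_congr rfl fun k hk => ?_
  have hkm : k ≤ m := Nat.lt_succ_iff.mp (mem_range.mp hk)
  rw [descPochhammer_eval_eq_ascPochhammer (r := γ + (m : R) - 1), descPochhammer_eval_neg,
    Nat.cast_sub hkm, show γ + m - 1 - ((m : R) - k) + 1 = γ + k by ring]
  ring

theorem ascPochhammer_eval_mul_eval_add {R : Type*} [CommSemiring R] {k m : ℕ} (h : k ≤ m)
    (γ : R) :
    (ascPochhammer R k).eval γ * (ascPochhammer R (m - k)).eval (γ + k) =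
      (ascPochhammer R m).eval γ := by
  have := congrArg (eval γ) (ascPochhammer_mul (S := R) k (m - k))
  rwa [eval_mul, eval_comp, eval_add, eval_X, eval_natCast, Nat.add_sub_cancel' h] at this

theorem ascPochhammer_eval_ne_zero_of_le {R : Type*} [CommSemiring R] {k m : ℕ} (h : k ≤ m)
    {γ : R} (hγ : (ascPochhammer R m).eval γ ≠ 0) : (ascPochhammer R k).eval γ ≠ 0 :=
  left_ne_zero_of_mul (ascPochhammer_eval_mul_eval_add h γ ▸ hγ)

theorem map_ascPochhammer_eval {R S : Type*} [Semiring R] [Semiring S] (f : R →+* S) (k : ℕ)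
    (x : R) : f ((ascPochhammer R k).eval x) = (ascPochhammer S k).eval (f x) := by
  rw [ascPochhammer_eval₂ f k (f x), eval₂_at_apply]

theorem sum_mul_pow_mul_one_add_pow {R : Type*} [CommSemiring R] (n : ℕ) (a : ℕ → R) (u : R) :
    ∑ k ∈ range (n + 1), a k * u ^ k * (1 + u) ^ (n - k) =
      ∑ m ∈ range (n + 1), (∑ k ∈ range (m + 1), (n - k).choose (m - k) * a k) * u ^ m := by
  calc ∑ k ∈ range (n + 1), a k * u ^ k * (1 + u) ^ (n - k)
      = ∑ k ∈ range (n + 1), ∑ m ∈ Ico k (n + 1), (n - k).choose (m - k) * a k * u ^ m := by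
        refine sum_congr rfl fun k hk => ?_
        have hkn : n + 1 - k = n - k + 1 := by have := mem_range.mp hk; omega
        rw [sum_Ico_eq_sum_range, hkn, add_comm 1 u, add_pow, mul_sum]
        refine sum_congr rfl fun j _ => ?_
        rw [Nat.add_sub_cancel_left, pow_add]
        ring
    _ = ∑ m ∈ range (n + 1), ∑ k ∈ range (m + 1), (n - k).choose (m - k) * a k * u ^ m := by
        refine sum_comm' fun k m => ?_
        simp only [mem_range, mem_Ico]
        omega
    _ = _ := by simp only [sum_mul]

theorem hypC_eq_sum_choose (n : ℕ) (β γ x : ℂ) :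
    hypC n β γ x = ∑ k ∈ range (n + 1),
      n.choose k * ((ascPochhammer ℂ k).eval β / (ascPochhammer ℂ k).eval γ) * (-x) ^ k := by
  refine sum_congr rfl fun k _ => ?_
  have hk : (k.factorial : ℂ) ≠ 0 := by exact_mod_cast k.factorial_ne_zero
  rw [ascPochhammer_eval_neg_natCast, neg_pow, mul_comm _ (k.factorial : ℂ), ← div_div]
  field_simp
  ring

theorem conj_hypC (n : ℕ) (β γ x : ℂ) :
    conj (hypC n β γ x) = hypC n (conj β) (conj γ) (conj x) := by
  simp [hypC, map_sum, map_ascPochhammer_eval]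

theorem hypC_one {m : ℕ} {α γ : ℂ} (hγ : (ascPochhammer ℂ m).eval γ ≠ 0) :
    hypC m α γ 1 = (ascPochhammer ℂ m).eval (γ - α) / (ascPochhammer ℂ m).eval γ := by
  rw [eq_div_iff hγ, hypC_eq_sum_choose, sum_mul, ascPochhammer_eval_sub_eq_sum]
  refine sum_congr rfl fun k hk => ?_
  have hkm : k ≤ m := Nat.lt_succ_iff.mp (mem_range.mp hk)
  have hγk := ascPochhammer_eval_ne_zero_of_le hkm hγ
  rw [← ascPochhammer_eval_mul_eval_add hkm]
  field_simp

theorem hypC_pfaff {n : ℕ} {β γ z : ℂ} (hγ : (ascPochhammer ℂ n).eval γ ≠ 0) (hz : z ≠ 1) :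
    hypC n β γ z = (1 - z) ^ n * hypC n (γ - β) γ (z / (z - 1)) := by
  set e : ℕ → ℂ := fun k => (ascPochhammer ℂ k).eval (γ - β) / (ascPochhammer ℂ k).eval γ
  have hterm : ∀ k ∈ range (n + 1), (1 - z) ^ n * (n.choose k * e k * (-(z / (z - 1))) ^ k) =
      (-1) ^ k * n.choose k * e k * (-z) ^ k * (1 + -z) ^ (n - k) := by
    intro k hk
    have h1 : 1 - z ≠ 0 := sub_ne_zero.mpr hz.symm
    have hpow : (1 - z) ^ n = (1 - z) ^ k * (1 - z) ^ (n - k) := by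
      rw [← pow_add, Nat.add_sub_cancel' (Nat.lt_succ_iff.mp (mem_range.mp hk))]
    have hsign : (-1 : ℂ) ^ k * (-z) ^ k = z ^ k := by rw [← mul_pow, neg_one_mul, neg_neg]
    have hdiv : -(z / (z - 1)) = z / (1 - z) := by rw [← div_neg, neg_sub]
    rw [hdiv, div_pow, hpow, ← sub_eq_add_neg]
    field_simp
    linear_combination (n.choose k * e k) * hsign.symm
  have hcoeff : ∀ m ∈ range (n + 1), ∑ k ∈ range (m + 1),
      (n - k).choose (m - k) * ((-1) ^ k * n.choose k * e k) =
        n.choose m * ((ascPochhammer ℂ m).eval β / (ascPochhammer ℂ m).eval γ) := by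
    intro m hm
    have hmn : m ≤ n := Nat.lt_succ_iff.mp (mem_range.mp hm)
    calc _ = n.choose m * hypC m (γ - β) γ 1 := by
          rw [hypC_eq_sum_choose, mul_sum]
          refine sum_congr rfl fun k hk => ?_
          have hchoose := congrArg (Nat.cast : ℕ → ℂ)
            (Nat.choose_mul (n := n) (Nat.lt_succ_iff.mp (mem_range.mp hk)))
          push_cast at hchoose
          linear_combination ((-1) ^ k * e k) * hchoose.symm
      _ = _ := by rw [hypC_one (ascPochhammer_eval_ne_zero_of_le hmn hγ), sub_sub_cancel]
  rw [hypC_eq_sum_choose, hypC_eq_sum_choose, mul_sum, sum_congr rfl hterm,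
    sum_mul_pow_mul_one_add_pow]
  exact sum_congr rfl fun m hm => by rw [hcoeff m hm]

/-- The reversed polynomial
`φ*_n(b;λ) = λ^n conj(φ_n(b;1/conj λ))` of the Szegő polynomial
`φ_n(b;λ) = ((2b+1)_n/(b+1)_n) ₂F₁(-n,b+1;2b+1;1-λ)` is
`((2b+1)_n/(b+1)_n) ₂F₁(-n,b;2b+1;1-λ)`. -/
theorem stmt15 (b : ℝ) (hb : b > -(1 / 2)) (n : ℕ) (φ : ℂ → ℂ)
    (hφ : ∀ μ : ℂ, φ μ =
      (ascPochhammer ℂ n).eval (2 * (b : ℂ) + 1) /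
          (ascPochhammer ℂ n).eval ((b : ℂ) + 1) *
        hypC n ((b : ℂ) + 1) (2 * (b : ℂ) + 1) (1 - μ)) :
    ∀ lam : ℂ, lam ≠ 0 →
      lam ^ n * (starRingEnd ℂ) (φ (1 / (starRingEnd ℂ) lam)) =
        (ascPochhammer ℂ n).eval (2 * (b : ℂ) + 1) /
            (ascPochhammer ℂ n).eval ((b : ℂ) + 1) *
          hypC n (b : ℂ) (2 * (b : ℂ) + 1) (1 - lam) := by
  intro lam hlam
  have hγ : (ascPochhammer ℂ n).eval (2 * (b : ℂ) + 1) ≠ 0 := by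
    have h := map_ascPochhammer_eval Complex.ofRealHom n (2 * b + 1)
    simp only [Complex.ofRealHom_eq_coe, Complex.ofReal_add, Complex.ofReal_mul,
      Complex.ofReal_one, Complex.ofReal_ofNat] at h
    rw [← h, Complex.ofReal_ne_zero]
    exact (ascPochhammer_pos n _ (by linarith)).ne'
  have hz : 1 - lam ≠ 1 := by simpa using hlam
  rw [hypC_pfaff hγ hz, hφ, map_mul, map_div₀, conj_hypC]
  simp only [map_ascPochhammer_eval, map_add, map_mul, map_one, map_ofNat, Complex.conj_ofReal,
    map_sub, map_div₀, Complex.conj_conj]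
  have hβ : 2 * (b : ℂ) + 1 - b = b + 1 := by ring
  have harg : (1 - lam) / (1 - lam - 1) = 1 - 1 / lam := by field_simp; ring
  rw [sub_sub_cancel, hβ, harg, mul_left_comm]
end
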